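/- arXiv:cs/0604077 — 4 statements merged into one kernel-verified Lean document; each statement's English description precedes it below -/
import Mathlib

section
/- The set function f(A) = (1/2)·log((1/σ_X² + Σ_{i=1}^L (1−e^{−2r_i})/σ_{N_i}²) / (1/σ_X² + Σ_{i∉A} (1−e^{−2r_i})/σ_{N_i}²)) + Σ_{i∈A} r_i, with f(∅)=0, is supermodular: for all subsets S, T of {1,…,L}, f(S) + f(T) ≤ f(S∪T) + f(S∩T). -/
open Finset Real

/-!
Write `g B = 1/σ_X² + ∑_{i ∈ B} c_i` with `c_i = (1 - e^{-2 r_i}) / σ_{N_i}² ≥ 0`, so that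
`f A = ½ (log g(univ) - log g(Aᶜ)) + ∑_{i ∈ A} r_i`. The sum of the `r_i` is modular, and
`g` is modular and monotone, hence `g(S ∩ T) g(S ∪ T) ≤ g S · g T` since the difference is
`(g S - g(S ∩ T)) (g T - g(S ∩ T)) ≥ 0`. So `log ∘ g` is submodular, and `A ↦ -log g(Aᶜ)`
is supermodular.
-/

theorem Real.log_add_log_le_of_add_eq {m u a b : ℝ} (hm : 0 < m) (ha : m ≤ a) (hb : m ≤ b)
    (hsum : m + u = a + b) : log m + log u ≤ log a + log b := by
  have hu : 0 < u := by linarith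
  rw [← log_mul hm.ne' hu.ne', ← log_mul (by linarith) (by linarith)]
  exact log_le_log (mul_pos hm hu) (by nlinarith [mul_nonneg (sub_nonneg.2 ha) (sub_nonneg.2 hb)])

theorem Finset.log_add_sum_union_add_log_add_sum_inter_le {α : Type*} [DecidableEq α]
    {a : ℝ} {c : α → ℝ} (ha : 0 < a) (hc : ∀ i, 0 ≤ c i) (S T : Finset α) :
    log (a + ∑ i ∈ S ∩ T, c i) + log (a + ∑ i ∈ S ∪ T, c i) ≤
      log (a + ∑ i ∈ S, c i) + log (a + ∑ i ∈ T, c i) := by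
  have hmono : ∀ {B C : Finset α}, B ⊆ C → ∑ i ∈ B, c i ≤ ∑ i ∈ C, c i :=
    fun h => sum_le_sum_of_subset_of_nonneg h fun i _ _ => hc i
  refine log_add_log_le_of_add_eq ?_ (by linarith [hmono (inter_subset_left (s₁ := S) (s₂ := T))])
    (by linarith [hmono (inter_subset_right (s₁ := S) (s₂ := T))])
    (by linarith [sum_union_inter (s₁ := S) (s₂ := T) (f := c)])
  linarith [sum_nonneg fun i (_ : i ∈ S ∩ T) => hc i]

theorem stmt_0_general (L : ℕ) (σX2 : ℝ) (hσX2 : 0 < σX2)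
    (σN2 : Fin L → ℝ) (hσN2 : ∀ i, 0 < σN2 i)
    (r : Fin L → ℝ) (hr : ∀ i, 0 ≤ r i)
    (f : Finset (Fin L) → ℝ)
    (hf : ∀ A : Finset (Fin L), f A =
      (1 / 2) * Real.log ((1 / σX2 + ∑ i, (1 - Real.exp (-2 * r i)) / σN2 i) /
        (1 / σX2 + ∑ i ∈ Aᶜ, (1 - Real.exp (-2 * r i)) / σN2 i)) + ∑ i ∈ A, r i) :
    ∀ S T : Finset (Fin L), f S + f T ≤ f (S ∪ T) + f (S ∩ T) := by
  intro S T
  have hc : ∀ i, 0 ≤ (1 - exp (-2 * r i)) / σN2 i := fun i =>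
    div_nonneg (sub_nonneg.2 (exp_le_one_iff.2 (by linarith [hr i]))) (hσN2 i).le
  have hpos : ∀ B : Finset (Fin L), 0 < 1 / σX2 + ∑ i ∈ B, (1 - exp (-2 * r i)) / σN2 i :=
    fun B => add_pos_of_pos_of_nonneg (by positivity) (sum_nonneg fun i _ => hc i)
  have hf' : ∀ A, f A = 1 / 2 * (log (1 / σX2 + ∑ i, (1 - exp (-2 * r i)) / σN2 i) -
      log (1 / σX2 + ∑ i ∈ Aᶜ, (1 - exp (-2 * r i)) / σN2 i)) + ∑ i ∈ A, r i := fun A => by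
    rw [hf A, log_div (hpos univ).ne' (hpos Aᶜ).ne']
  have hlog := log_add_sum_union_add_log_add_sum_inter_le (by positivity : 0 < 1 / σX2) hc Sᶜ Tᶜ
  rw [← compl_union, ← compl_inter] at hlog
  rw [hf' S, hf' T, hf' (S ∪ T), hf' (S ∩ T)]
  linarith [sum_union_inter (s₁ := S) (s₂ := T) (f := r)]

/-- Supermodularity of the rank function of the Gaussian CEO contra-polymatroid. -/
theorem stmt_0 (L : ℕ) (hL : 0 < L) (σX2 : ℝ) (hσX2 : 0 < σX2)
    (σN2 : Fin L → ℝ) (hσN2 : ∀ i, 0 < σN2 i)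
    (r : Fin L → ℝ) (hr : ∀ i, 0 ≤ r i)
    (f : Finset (Fin L) → ℝ)
    (hf : ∀ A : Finset (Fin L), f A =
      (1 / 2) * Real.log ((1 / σX2 + ∑ i, (1 - Real.exp (-2 * r i)) / σN2 i) /
        (1 / σX2 + ∑ i ∈ Aᶜ, (1 - Real.exp (-2 * r i)) / σN2 i)) + ∑ i ∈ A, r i)
    (hf0 : f ∅ = 0) :
    ∀ S T : Finset (Fin L), f S + f T ≤ f (S ∪ T) + f (S ∩ T) :=
  stmt_0_general L σX2 hσX2 σN2 hσN2 r hr f hf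
end

section
/- If r_i > 0 for all i ∈ {1,…,L}, then the set function f(A) = (1/2)·log((1/σ_X² + Σ_{i=1}^L (1−e^{−2r_i})/σ_{N_i}²) / (1/σ_X² + Σ_{i∉A} (1−e^{−2r_i})/σ_{N_i}²)) + Σ_{i∈A} r_i (with f(∅)=0) is strictly supermodular on nonempty sets: for all nonempty S, T ⊆ {1,…,L} with S ⊄ T and T ⊄ S, f(S) + f(T) < f(S∪T) + f(S∩T). -/
/-!
Write `c A = 1/σ_X² + ∑_{i ∉ A} a i` with `a i = (1 - e^{-2 r_i}) / σ_{N_i}² > 0`, so that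
`f A = ½ (log c ∅ - log c A) + ∑_{i ∈ A} r i`. The sum over `A` is modular and so is `c`, hence
`c (S ∪ T) + c (S ∩ T) = c S + c T`. For a crossing pair `c (S ∪ T)` is strictly smaller than
both `c S` and `c T`, so strict concavity of `log` gives
`log c (S ∪ T) + log c (S ∩ T) < log c S + log c T`.
-/

open Finset Real

theorem Real.log_add_log_lt_of_add_eq {x y u v : ℝ} (hx : 0 < x) (h : x + y = u + v)
    (hxu : x < u) (hxv : x < v) : log x + log y < log u + log v := by
  have hy : 0 < y := by linarith
  -- `u v - x y = (u - x) (v - x)` because `y = u + v - x`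
  have hmul : x * y < u * v := by nlinarith [mul_pos (sub_pos.2 hxu) (sub_pos.2 hxv)]
  rw [← log_mul hx.ne' hy.ne', ← log_mul (hx.trans hxu).ne' (hx.trans hxv).ne']
  exact log_lt_log (mul_pos hx hy) hmul

namespace Finset

variable {ι : Type*} [Fintype ι] [DecidableEq ι]

theorem sum_compl_union_add_sum_compl_inter {M : Type*} [AddCommMonoid M] (a : ι → M)
    (S T : Finset ι) :
    ∑ i ∈ (S ∪ T)ᶜ, a i + ∑ i ∈ (S ∩ T)ᶜ, a i = ∑ i ∈ Sᶜ, a i + ∑ i ∈ Tᶜ, a i := by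
  rw [compl_union, compl_inter, add_comm, sum_union_inter]

theorem sum_compl_union_lt_sum_compl {a : ι → ℝ} (ha : ∀ i, 0 < a i) {S T : Finset ι}
    (hTS : ¬ T ⊆ S) : ∑ i ∈ (S ∪ T)ᶜ, a i < ∑ i ∈ Sᶜ, a i := by
  obtain ⟨x, hxT, hxS⟩ := not_subset.mp hTS
  exact sum_lt_sum_of_subset (compl_subset_compl.mpr subset_union_left)
    (mem_compl.mpr hxS) (by simp [hxT]) (ha x) fun i _ _ => (ha i).le

theorem log_add_sum_compl_strict_supermodular {b : ℝ} (hb : 0 < b) {a : ι → ℝ}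
    (ha : ∀ i, 0 < a i) {S T : Finset ι} (hST : ¬ S ⊆ T) (hTS : ¬ T ⊆ S) :
    log (b + ∑ i ∈ (S ∪ T)ᶜ, a i) + log (b + ∑ i ∈ (S ∩ T)ᶜ, a i) <
      log (b + ∑ i ∈ Sᶜ, a i) + log (b + ∑ i ∈ Tᶜ, a i) := by
  have hS := sum_compl_union_lt_sum_compl ha hTS
  have hT := sum_compl_union_lt_sum_compl ha hST
  rw [union_comm] at hT
  have hpos := add_pos_of_pos_of_nonneg hb (sum_nonneg fun i (_ : i ∈ (S ∪ T)ᶜ) => (ha i).le)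
  refine log_add_log_lt_of_add_eq hpos ?_ (by linarith) (by linarith)
  linear_combination sum_compl_union_add_sum_compl_inter a S T

end Finset

theorem stmt_1_general (L : ℕ) (σX2 : ℝ) (hσX2 : 0 < σX2)
    (σN2 : Fin L → ℝ) (hσN2 : ∀ i, 0 < σN2 i)
    (r : Fin L → ℝ) (hr : ∀ i, 0 < r i)
    (f : Finset (Fin L) → ℝ)
    (hf : ∀ A : Finset (Fin L), f A =
      (1 / 2) * Real.log ((1 / σX2 + ∑ i, (1 - Real.exp (-2 * r i)) / σN2 i) /
        (1 / σX2 + ∑ i ∈ Aᶜ, (1 - Real.exp (-2 * r i)) / σN2 i)) + ∑ i ∈ A, r i) :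
    ∀ S T : Finset (Fin L), S.Nonempty → T.Nonempty → ¬ S ⊆ T → ¬ T ⊆ S →
      f S + f T < f (S ∪ T) + f (S ∩ T) := by
  intro S T _ _ hST hTS
  set a : Fin L → ℝ := fun i => (1 - exp (-2 * r i)) / σN2 i
  have ha : ∀ i, 0 < a i := fun i =>
    div_pos (sub_pos.2 (exp_lt_one_iff.2 (by linarith [hr i]))) (hσN2 i)
  have hc : ∀ A : Finset (Fin L), 0 < 1 / σX2 + ∑ i ∈ Aᶜ, a i := fun A =>
    add_pos_of_pos_of_nonneg (one_div_pos.2 hσX2) (sum_nonneg fun i _ => (ha i).le)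
  have hf' : ∀ A, f A = (1 / 2) * (log (1 / σX2 + ∑ i, a i) - log (1 / σX2 + ∑ i ∈ Aᶜ, a i))
      + ∑ i ∈ A, r i := fun A => by
    rw [hf, log_div (by simpa using (hc ∅).ne') (hc A).ne']
  rw [hf', hf', hf', hf']
  linarith [log_add_sum_compl_strict_supermodular (one_div_pos.2 hσX2) ha hST hTS,
    sum_union_inter (s₁ := S) (s₂ := T) (f := r)]

/-- Strict supermodularity on crossing pairs when all `r i > 0`. -/
theorem stmt_1 (L : ℕ) (hL : 0 < L) (σX2 : ℝ) (hσX2 : 0 < σX2)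
    (σN2 : Fin L → ℝ) (hσN2 : ∀ i, 0 < σN2 i)
    (r : Fin L → ℝ) (hr : ∀ i, 0 < r i)
    (f : Finset (Fin L) → ℝ)
    (hf : ∀ A : Finset (Fin L), f A =
      (1 / 2) * Real.log ((1 / σX2 + ∑ i, (1 - Real.exp (-2 * r i)) / σN2 i) /
        (1 / σX2 + ∑ i ∈ Aᶜ, (1 - Real.exp (-2 * r i)) / σN2 i)) + ∑ i ∈ A, r i)
    (hf0 : f ∅ = 0) :
    ∀ S T : Finset (Fin L), S.Nonempty → T.Nonempty → ¬ S ⊆ T → ¬ T ⊆ S →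
      f S + f T < f (S ∪ T) + f (S ∩ T) :=
  stmt_1_general L σX2 hσX2 σN2 hσN2 r hr f hf
end

section
/- For each nonempty A ⊆ {1,…,L} and each D > 0, the function f_D(A, r) = (1/2)·log(1/D) − (1/2)·log(1/σ_X² + Σ_{i∉A} (1−e^{−2r_i})/σ_{N_i}²) + Σ_{i∈A} r_i is convex in r = (r_1,…,r_L) on [0,∞)^L. -/
/-!
The map `x ↦ 1 / σX2 + ∑ i ∉ A, (1 - exp (-2 xᵢ)) / σN2ᵢ` is a nonnegative combination of the
concave functions `t ↦ 1 - exp (-2 t)` plus a constant, hence concave, and it is positive on the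
orthant. Since `log` is concave and increasing on `(0, ∞)`, its logarithm is concave, so `f_D` is a
constant plus a convex function plus the linear map `x ↦ ∑ i ∈ A, xᵢ`.
-/

open Finset Real

theorem ConvexOn.finset_sum {𝕜 E β ι : Type*} [Semiring 𝕜] [PartialOrder 𝕜] [AddCommMonoid E]
    [AddCommMonoid β] [PartialOrder β] [IsOrderedAddMonoid β] [SMul 𝕜 E] [Module 𝕜 β]
    {s : Set E} (hs : Convex 𝕜 s) (t : Finset ι) {f : ι → E → β}
    (hf : ∀ i ∈ t, ConvexOn 𝕜 s (f i)) : ConvexOn 𝕜 s fun x => ∑ i ∈ t, f i x := by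
  classical
  induction t using Finset.induction_on with
  | empty => simpa using convexOn_const (0 : β) hs
  | insert i t hi ih =>
    simp only [Finset.sum_insert hi]
    exact (hf i (mem_insert_self i t)).add (ih fun j hj => hf j (mem_insert_of_mem hj))

theorem ConcaveOn.finset_sum {𝕜 E β ι : Type*} [Semiring 𝕜] [PartialOrder 𝕜] [AddCommMonoid E]
    [AddCommMonoid β] [PartialOrder β] [IsOrderedAddMonoid β] [SMul 𝕜 E] [Module 𝕜 β]
    {s : Set E} (hs : Convex 𝕜 s) (t : Finset ι) {f : ι → E → β}
    (hf : ∀ i ∈ t, ConcaveOn 𝕜 s (f i)) : ConcaveOn 𝕜 s fun x => ∑ i ∈ t, f i x :=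
  ConvexOn.finset_sum (β := βᵒᵈ) hs t hf

theorem concaveOn_one_sub_exp_mul (c : ℝ) : ConcaveOn ℝ Set.univ fun t : ℝ => 1 - exp (c * t) :=
  (concaveOn_const 1 convex_univ).sub (convexOn_exp.comp_linearMap (LinearMap.mul ℝ ℝ c))

theorem concaveOn_sum_one_sub_exp_mul_div {ι : Type*} (t : Finset ι) (c : ℝ) {w : ι → ℝ}
    (hw : ∀ i ∈ t, 0 ≤ w i) :
    ConcaveOn ℝ Set.univ fun x : ι → ℝ => ∑ i ∈ t, (1 - exp (c * x i)) / w i := by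
  refine ConcaveOn.finset_sum convex_univ t fun i hi => ?_
  refine (((concaveOn_one_sub_exp_mul c).comp_linearMap
    (LinearMap.proj (R := ℝ) (φ := fun _ : ι => ℝ) i)).smul (inv_nonneg.2 (hw i hi))).congr ?_
  exact fun x _ => by simp [div_eq_inv_mul]

theorem ConcaveOn.log_of_pos {E : Type*} [AddCommMonoid E] [Module ℝ E] {s : Set E} {f : E → ℝ}
    (hf : ConcaveOn ℝ s f) (hpos : ∀ x ∈ s, 0 < f x) : ConcaveOn ℝ s fun x => log (f x) := by
  refine ⟨hf.1, fun x hx y hy a b ha hb hab => ?_⟩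
  calc a • log (f x) + b • log (f y) ≤ log (a • f x + b • f y) :=
        strictConcaveOn_log_Ioi.concaveOn.2 (hpos x hx) (hpos y hy) ha hb hab
    _ ≤ log (f (a • x + b • y)) :=
        log_le_log (strictConcaveOn_log_Ioi.concaveOn.1 (hpos x hx) (hpos y hy) ha hb hab)
          (hf.2 hx hy ha hb hab)

theorem stmt_3_general (L : ℕ) (σX2 : ℝ) (hσX2 : 0 < σX2)
    (σN2 : Fin L → ℝ) (hσN2 : ∀ i, 0 < σN2 i)
    (D : ℝ) (A : Finset (Fin L))
    (fD : (Fin L → ℝ) → ℝ)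
    (hfD : ∀ x, fD x = (1 / 2) * Real.log (1 / D)
      - (1 / 2) * Real.log (1 / σX2 + ∑ i ∈ Aᶜ, (1 - Real.exp (-2 * x i)) / σN2 i)
      + ∑ i ∈ A, x i) :
    ConvexOn ℝ {x : Fin L → ℝ | ∀ i, 0 ≤ x i} fD := by
  set S : Set (Fin L → ℝ) := {x | ∀ i, 0 ≤ x i}
  set g : (Fin L → ℝ) → ℝ := fun x => 1 / σX2 + ∑ i ∈ Aᶜ, (1 - exp (-2 * x i)) / σN2 i
  have hconvex : Convex ℝ S := convex_Ici 0
  have hg_pos : ∀ x ∈ S, 0 < g x := fun x hx =>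
    add_pos_of_pos_of_nonneg (by positivity) <| sum_nonneg fun i _ =>
      div_nonneg (sub_nonneg.2 <| exp_le_one_iff.2 <| by linarith [hx i]) (hσN2 i).le
  have hg_concave : ConcaveOn ℝ S g :=
    ((concaveOn_const _ convex_univ).add <| concaveOn_sum_one_sub_exp_mul_div Aᶜ (-2)
      fun i _ => (hσN2 i).le).subset (Set.subset_univ _) hconvex
  have hlinear : ConvexOn ℝ S fun x => ∑ i ∈ A, x i :=
    ConvexOn.finset_sum hconvex A fun i _ => (LinearMap.proj (R := ℝ) i).convexOn hconvex
  have hfD' : fD = fun x => (1 / 2 : ℝ) • -log (g x) + ∑ i ∈ A, x i + (1 / 2) * log (1 / D) := by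
    funext x
    rw [hfD, smul_eq_mul]
    ring
  rw [hfD']
  exact ((((hg_concave.log_of_pos hg_pos).neg).smul (by norm_num)).add hlinear).add_const _

/-- Convexity in `r` of the constraint function `f_D(A, ·)`. -/
theorem stmt_3 (L : ℕ) (σX2 : ℝ) (hσX2 : 0 < σX2)
    (σN2 : Fin L → ℝ) (hσN2 : ∀ i, 0 < σN2 i)
    (D : ℝ) (hD : 0 < D) (A : Finset (Fin L)) (hA : A.Nonempty)
    (fD : (Fin L → ℝ) → ℝ)
    (hfD : ∀ x, fD x = (1 / 2) * Real.log (1 / D)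
      - (1 / 2) * Real.log (1 / σX2 + ∑ i ∈ Aᶜ, (1 - Real.exp (-2 * x i)) / σN2 i)
      + ∑ i ∈ A, x i) :
    ConvexOn ℝ {x : Fin L → ℝ | ∀ i, 0 ≤ x i} fD :=
  stmt_3_general L σX2 hσX2 σN2 hσN2 D A fD hfD
end

section
/- Uniqueness in Lemma 3.5: fix L, positive σ_X², σ_{N_i}² (i=1,…,L), a target D* > 0, and R ∈ [0,∞)^L. Suppose r', r'' ∈ [0,∞)^L both satisfy (a) 1/σ_X² + Σ_i (1−e^{−2r_i})/σ_{N_i}² = 1/D*, and (b) for all nonempty A ⊆ {1,…,L}: Σ_{i∈A} R_i ≥ (1/2)log(1/D*) − (1/2)log(1/σ_X² + Σ_{i∉A}(1−e^{−2r_i})/σ_{N_i}²) + Σ_{i∈A} r_i, and furthermore the set { r ∈ [0,∞)^L satisfying (b) and 1/σ_X² + Σ_i (1−e^{−2r_i})/σ_{N_i}² ≥ 1/D* } contains both r' and r'' and any such r must satisfy equality in (a). If additionally all coordinates of r' and r'' are finite, then r' = r''. -/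
open Finset Real

/-! Both the distortion constraint `1 / Dstar ≤ invDistortion σX2 σN2 univ r` and each rate
constraint (a constant minus `log` of a concave positive function plus a linear term) cut out
convex sets, so the feasible region is convex. Since `t ↦ 1 - exp (-2 t)` is strictly concave,
`invDistortion σX2 σN2 univ` is strictly concave, and a strictly concave function that is
constant on a convex set forces that set to be a single point: at the midpoint of two distinct
feasible points the distortion constraint would be slack. -/

/-- The reciprocal of the MMSE of `X` given the observations of the encoders in `s` at rates
`r`. -/
noncomputable def invDistortion {ι : Type*} (σX2 : ℝ) (σN2 : ι → ℝ) (s : Finset ι)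
    (r : ι → ℝ) : ℝ :=
  1 / σX2 + ∑ i ∈ s, (1 - exp (-2 * r i)) / σN2 i

lemma strictConcaveOn_one_sub_exp_mul_div {c σ : ℝ} (hc : c ≠ 0) (hσ : 0 < σ) :
    StrictConcaveOn ℝ Set.univ fun t => (1 - exp (c * t)) / σ := by
  refine ⟨convex_univ, fun x _ y _ hxy a b ha hb hab => ?_⟩
  have hexp := strictConvexOn_exp.2 (Set.mem_univ (c * x)) (Set.mem_univ (c * y))
    (by simpa [hc] using hxy) ha hb hab
  simp only [smul_eq_mul] at hexp ⊢
  rw [show c * (a * x + b * y) = a * (c * x) + b * (c * y) by ring,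
    show a * ((1 - exp (c * x)) / σ) + b * ((1 - exp (c * y)) / σ)
      = (a * (1 - exp (c * x)) + b * (1 - exp (c * y))) / σ by ring]
  gcongr
  linear_combination hexp + hab

section
variable {ι : Type*}

lemma concaveOn_sum_apply {g : ι → ℝ → ℝ} (s : Finset ι)
    (hg : ∀ i ∈ s, ConcaveOn ℝ Set.univ (g i)) :
    ConcaveOn ℝ Set.univ fun x : ι → ℝ => ∑ i ∈ s, g i (x i) := by
  refine ⟨convex_univ, fun x _ y _ a b ha hb hab => ?_⟩
  simp only [smul_eq_mul, mul_sum, ← sum_add_distrib, Pi.add_apply, Pi.smul_apply]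
  exact sum_le_sum fun i hi => (hg i hi).2 (Set.mem_univ _) (Set.mem_univ _) ha hb hab

lemma strictConcaveOn_sum_apply [Fintype ι] {g : ι → ℝ → ℝ}
    (hg : ∀ i, StrictConcaveOn ℝ Set.univ (g i)) :
    StrictConcaveOn ℝ Set.univ fun x : ι → ℝ => ∑ i, g i (x i) := by
  refine ⟨convex_univ, fun x _ y _ hxy a b ha hb hab => ?_⟩
  obtain ⟨j, hj⟩ := Function.ne_iff.1 hxy
  simp only [smul_eq_mul, mul_sum, ← sum_add_distrib, Pi.add_apply, Pi.smul_apply]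
  refine sum_lt_sum (fun i _ => (hg i).concaveOn.2 (Set.mem_univ _) (Set.mem_univ _)
    ha.le hb.le hab) ⟨j, mem_univ j, (hg j).2 (Set.mem_univ _) (Set.mem_univ _) hj ha hb hab⟩

end

section invDistortion
variable {ι : Type*} {σX2 : ℝ} {σN2 : ι → ℝ}

lemma concaveOn_invDistortion (hσN2 : ∀ i, 0 < σN2 i) (s : Finset ι) :
    ConcaveOn ℝ Set.univ (invDistortion σX2 σN2 s) :=
  (concaveOn_const _ convex_univ).add <| concaveOn_sum_apply s fun i _ =>
    (strictConcaveOn_one_sub_exp_mul_div (by norm_num) (hσN2 i)).concaveOn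

lemma strictConcaveOn_invDistortion [Fintype ι] (hσN2 : ∀ i, 0 < σN2 i) :
    StrictConcaveOn ℝ Set.univ (invDistortion σX2 σN2 univ) :=
  (concaveOn_const _ convex_univ).add_strictConcaveOn <| strictConcaveOn_sum_apply fun i =>
    strictConcaveOn_one_sub_exp_mul_div (by norm_num) (hσN2 i)

lemma invDistortion_pos (hσX2 : 0 < σX2) (hσN2 : ∀ i, 0 < σN2 i) (s : Finset ι) {r : ι → ℝ}
    (hr : ∀ i, 0 ≤ r i) : 0 < invDistortion σX2 σN2 s r := by
  refine add_pos_of_pos_of_nonneg (by positivity) (sum_nonneg fun i _ => ?_)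
  have : exp (-2 * r i) ≤ 1 := exp_le_one_iff.2 (by linarith [hr i])
  exact div_nonneg (by linarith) (hσN2 i).le

end invDistortion

lemma ConcaveOn.log {E : Type*} [AddCommMonoid E] [Module ℝ E] {s : Set E} {f : E → ℝ}
    (hf : ConcaveOn ℝ s f) (hpos : ∀ x ∈ s, 0 < f x) : ConcaveOn ℝ s fun x => Real.log (f x) := by
  refine ⟨hf.1, fun x hx y hy a b ha hb hab => ?_⟩
  have hmem := convex_Ioi (0 : ℝ) (hpos x hx) (hpos y hy) ha hb hab
  calc a • Real.log (f x) + b • Real.log (f y) ≤ Real.log (a • f x + b • f y) :=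
        strictConcaveOn_log_Ioi.concaveOn.2 (hpos x hx) (hpos y hy) ha hb hab
    _ ≤ Real.log (f (a • x + b • y)) := log_le_log hmem (hf.2 hx hy ha hb hab)

lemma StrictConcaveOn.subsingleton_of_eqOn_const {𝕜 E β : Type*} [Field 𝕜] [LinearOrder 𝕜]
    [IsStrictOrderedRing 𝕜] [AddCommMonoid E] [Module 𝕜 E] [AddCommMonoid β] [PartialOrder β]
    [Module 𝕜 β] {s : Set E} {f : E → β} {c : β} (hf : StrictConcaveOn 𝕜 s f)
    (hc : ∀ x ∈ s, f x = c) : s.Subsingleton := by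
  intro x hx y hy
  by_contra hxy
  have hlt := hf.2 hx hy hxy (half_pos one_pos) (half_pos one_pos) (add_halves 1)
  rw [hc x hx, hc y hy, hc _ (hf.1 hx hy (half_pos one_pos).le (half_pos one_pos).le
    (add_halves 1)), ← add_smul, add_halves, one_smul] at hlt
  exact hlt.false

section feasible
variable {ι : Type*} [Fintype ι] [DecidableEq ι]

def feasibleRates (σX2 : ℝ) (σN2 : ι → ℝ) (Dstar : ℝ) (R : ι → ℝ) : Set (ι → ℝ) :=
  {r | (∀ i, 0 ≤ r i) ∧
    (∀ A : Finset ι, A.Nonempty →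
      (1 / 2) * Real.log (1 / Dstar) - (1 / 2) * Real.log (invDistortion σX2 σN2 Aᶜ r)
        + ∑ i ∈ A, r i ≤ ∑ i ∈ A, R i) ∧
    1 / Dstar ≤ invDistortion σX2 σN2 univ r}

lemma convex_feasibleRates {σX2 : ℝ} {σN2 : ι → ℝ} (hσX2 : 0 < σX2) (hσN2 : ∀ i, 0 < σN2 i)
    (Dstar : ℝ) (R : ι → ℝ) : Convex ℝ (feasibleRates σX2 σN2 Dstar R) := by
  rintro x ⟨hx0, hxA, hxD⟩ y ⟨hy0, hyA, hyD⟩ a b ha hb hab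
  refine ⟨fun i => ?_, fun A hA => ?_, ?_⟩
  · simp only [Pi.add_apply, Pi.smul_apply, smul_eq_mul]
    have := hx0 i; have := hy0 i
    positivity
  · have hlog := ((concaveOn_invDistortion hσN2 Aᶜ).subset (Set.subset_univ _)
      (convex_Ici (0 : ι → ℝ))).log fun r hr => invDistortion_pos hσX2 hσN2 Aᶜ hr
    have hlog' := hlog.2 hx0 hy0 ha hb hab
    have hsum : ∑ i ∈ A, (a • x + b • y) i = a * ∑ i ∈ A, x i + b * ∑ i ∈ A, y i := by
      simp only [Pi.add_apply, Pi.smul_apply, smul_eq_mul, sum_add_distrib, mul_sum]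
    simp only [smul_eq_mul] at hlog'
    rw [hsum]
    linear_combination mul_le_mul_of_nonneg_left (hxA A hA) ha
      + mul_le_mul_of_nonneg_left (hyA A hA) hb + (1 / 2 : ℝ) * hlog'
      + (∑ i ∈ A, R i - 1 / 2 * Real.log (1 / Dstar)) * hab
  · have hP := (concaveOn_invDistortion (σX2 := σX2) hσN2 univ).2 (Set.mem_univ x)
      (Set.mem_univ y) ha hb hab
    simp only [smul_eq_mul] at hP
    linear_combination mul_le_mul_of_nonneg_left hxD ha + mul_le_mul_of_nonneg_left hyD hb + hP
      - 1 / Dstar * hab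

end feasible

theorem stmt_8_general (L : ℕ) (σX2 : ℝ) (hσX2 : 0 < σX2)
    (σN2 : Fin L → ℝ) (hσN2 : ∀ i, 0 < σN2 i)
    (Dstar : ℝ)
    (R : Fin L → ℝ)
    (feas : (Fin L → ℝ) → Prop)
    (hfeas : ∀ r : Fin L → ℝ, feas r ↔ ((∀ i, 0 ≤ r i) ∧
      (∀ A : Finset (Fin L), A.Nonempty →
        (1 / 2) * Real.log (1 / Dstar)
          - (1 / 2) * Real.log (1 / σX2 + ∑ i ∈ Aᶜ, (1 - Real.exp (-2 * r i)) / σN2 i)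
          + ∑ i ∈ A, r i ≤ ∑ i ∈ A, R i) ∧
      1 / Dstar ≤ 1 / σX2 + ∑ i, (1 - Real.exp (-2 * r i)) / σN2 i))
    (heq : ∀ r : Fin L → ℝ, feas r →
      1 / σX2 + ∑ i, (1 - Real.exp (-2 * r i)) / σN2 i = 1 / Dstar)
    (r' r'' : Fin L → ℝ) (hr' : feas r') (hr'' : feas r'') :
    r' = r'' := by
  have hfeasSet : {r | feas r} = feasibleRates σX2 σN2 Dstar R := Set.ext hfeas
  have hconcave : StrictConcaveOn ℝ {r | feas r} (invDistortion σX2 σN2 univ) :=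
    (strictConcaveOn_invDistortion hσN2).subset (Set.subset_univ _)
      (hfeasSet ▸ convex_feasibleRates hσX2 hσN2 Dstar R)
  exact hconcave.subsingleton_of_eqOn_const heq hr' hr''

/-- Uniqueness part of Lemma 3.5: two feasible points whose distortion
constraint is tight (as is forced for every feasible point) must coincide. -/
theorem stmt_8 (L : ℕ) (σX2 : ℝ) (hσX2 : 0 < σX2)
    (σN2 : Fin L → ℝ) (hσN2 : ∀ i, 0 < σN2 i)
    (Dstar : ℝ) (hD : 0 < Dstar)
    (R : Fin L → ℝ) (hR : ∀ i, 0 ≤ R i)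
    (feas : (Fin L → ℝ) → Prop)
    (hfeas : ∀ r : Fin L → ℝ, feas r ↔ ((∀ i, 0 ≤ r i) ∧
      (∀ A : Finset (Fin L), A.Nonempty →
        (1 / 2) * Real.log (1 / Dstar)
          - (1 / 2) * Real.log (1 / σX2 + ∑ i ∈ Aᶜ, (1 - Real.exp (-2 * r i)) / σN2 i)
          + ∑ i ∈ A, r i ≤ ∑ i ∈ A, R i) ∧
      1 / Dstar ≤ 1 / σX2 + ∑ i, (1 - Real.exp (-2 * r i)) / σN2 i))
    (heq : ∀ r : Fin L → ℝ, feas r →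
      1 / σX2 + ∑ i, (1 - Real.exp (-2 * r i)) / σN2 i = 1 / Dstar)
    (r' r'' : Fin L → ℝ) (hr' : feas r') (hr'' : feas r'')
    (ha' : 1 / σX2 + ∑ i, (1 - Real.exp (-2 * r' i)) / σN2 i = 1 / Dstar)
    (ha'' : 1 / σX2 + ∑ i, (1 - Real.exp (-2 * r'' i)) / σN2 i = 1 / Dstar) :
    r' = r'' :=
  stmt_8_general L σX2 hσX2 σN2 hσN2 Dstar R feas hfeas heq r' r'' hr' hr''
end
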